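/- arXiv:2403.08178 — 6 statements merged into one kernel-verified Lean document; each statement's English description precedes it below -/
import Mathlib

section
/- Let n be a positive integer, f : ℝⁿ → ℝⁿ, let 𝒳₀ and 𝒳ᵤ be subsets of ℝⁿ, and let ε₁ > 0. Suppose B : ℝⁿ → ℝ is continuously differentiable and satisfies: (a) B(x) ≤ 0 for all x ∈ 𝒳₀; (b) B(x) > 0 for all x ∈ 𝒳ᵤ; (c) ⟨∇B(x), f(x)⟩ ≤ 0 for all x ∈ ℝⁿ with |B(x)| ≤ √ε₁. Then every trajectory of the dynamical system ẋ = f(x) starting at a point of 𝒳₀ never enters 𝒳ᵤ: if x : ℝ → ℝⁿ is differentiable with x′(t) = f(x(t)) for all t ≥ 0 and x(0) ∈ 𝒳₀, then x(t) ∉ 𝒳ᵤ for all t ≥ 0. -/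
/-!
Along a trajectory, `g t = B (x t)` starts nonpositive, and by the chain rule and (c) it cannot
increase while `0 < g < √ε₁`. Comparing `g` on `[0, t]` with the lines `s ↦ η (1 + s)` for small
`η > 0`, which `g` can only meet while its derivative is `≤ 0 < η`, gives `g ≤ 0`, whereas (b)
requires `B > 0` on the unsafe set.
-/

theorem nonpos_of_hasDerivAt_nonpos_of_pos_lt {g g' : ℝ → ℝ} {a c : ℝ} (hc : 0 < c)
    (hg : ∀ s, a ≤ s → HasDerivAt g (g' s) s) (ha : g a ≤ 0)
    (hg' : ∀ s, a ≤ s → 0 < g s → g s < c → g' s ≤ 0) {t : ℝ} (ht : a ≤ t) : g t ≤ 0 := by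
  by_contra! hpos
  set L := 1 + (t - a)
  have hL : 0 < L := by positivity
  -- the line `η (1 + (s - a))` then stays below both `c` and `g t` on `[a, t]`
  set η := min c (g t) / (2 * L)
  have hη : 0 < η := by positivity
  have hηL : η * L < min c (g t) := by
    have : η * L = min c (g t) / 2 := by simp only [η]; field_simp
    linarith [lt_min hc hpos]
  have fence : g t ≤ η * (1 + (t - a)) := by
    refine image_le_of_deriv_right_lt_deriv_boundary (B := fun s => η * (1 + (s - a)))
      (B' := fun _ => η) (fun s hs => (hg s hs.1).continuousAt.continuousWithinAt)
      (fun s hs => (hg s hs.1).hasDerivWithinAt) (by simpa using ha.trans hη.le)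
      (fun s => by simpa using ((hasDerivAt_id s).sub_const a).const_add 1 |>.const_mul η)
      ?_ ⟨ht, le_rfl⟩
    rintro s ⟨has, hst⟩ hgs
    have hpos_s : 0 < g s := by rw [hgs]; nlinarith
    have hlt_c : g s < c := by
      rw [hgs]
      have : η * (1 + (s - a)) ≤ η * L := by gcongr; linarith
      linarith [min_le_left c (g t)]
    linarith [hg' s has hpos_s hlt_c]
  linarith [min_le_right c (g t)]

theorem barrier_certificate_safety_general
    (n : ℕ)
    (f : EuclideanSpace ℝ (Fin n) → EuclideanSpace ℝ (Fin n))
    (X0 Xu : Set (EuclideanSpace ℝ (Fin n)))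
    (ε₁ : ℝ) (hε₁ : 0 < ε₁)
    (B : EuclideanSpace ℝ (Fin n) → ℝ)
    (hB : ContDiff ℝ 1 B)
    (hB0 : ∀ x ∈ X0, B x ≤ 0)
    (hBu : ∀ x ∈ Xu, 0 < B x)
    (hBlie : ∀ x : EuclideanSpace ℝ (Fin n),
      |B x| ≤ Real.sqrt ε₁ → fderiv ℝ B x (f x) ≤ 0)
    (x : ℝ → EuclideanSpace ℝ (Fin n))
    (hx : Differentiable ℝ x)
    (hode : ∀ t : ℝ, 0 ≤ t → deriv x t = f (x t))
    (hinit : x 0 ∈ X0) :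
    ∀ t : ℝ, 0 ≤ t → x t ∉ Xu := by
  have hBx : ∀ s, 0 ≤ s → HasDerivAt (B ∘ x) (fderiv ℝ B (x s) (f (x s))) s := fun s hs => by
    rw [← hode s hs]
    exact ((hB.differentiable one_ne_zero) (x s)).hasFDerivAt.comp_hasDerivAt s (hx s).hasDerivAt
  intro t ht hxt
  have hBt : B (x t) ≤ 0 :=
    nonpos_of_hasDerivAt_nonpos_of_pos_lt (Real.sqrt_pos.mpr hε₁) hBx (hB0 _ hinit)
      (fun s _ hpos hlt => hBlie (x s) ((abs_of_pos hpos).trans_le hlt.le)) ht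
  exact (hBu _ hxt).not_ge hBt

/-- Barrier certificates ensure safety: if `B ≤ 0` on the initial set, `B > 0` on the
unsafe set, and the Lie derivative of `B` along `f` is nonpositive wherever
`|B x| ≤ √ε₁`, then trajectories starting in the initial set never enter the unsafe set. -/
theorem barrier_certificate_safety
    (n : ℕ) (hn : 0 < n)
    (f : EuclideanSpace ℝ (Fin n) → EuclideanSpace ℝ (Fin n))
    (X0 Xu : Set (EuclideanSpace ℝ (Fin n)))
    (ε₁ : ℝ) (hε₁ : 0 < ε₁)
    (B : EuclideanSpace ℝ (Fin n) → ℝ)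
    (hB : ContDiff ℝ 1 B)
    (hB0 : ∀ x ∈ X0, B x ≤ 0)
    (hBu : ∀ x ∈ Xu, 0 < B x)
    (hBlie : ∀ x : EuclideanSpace ℝ (Fin n),
      |B x| ≤ Real.sqrt ε₁ → fderiv ℝ B x (f x) ≤ 0)
    (x : ℝ → EuclideanSpace ℝ (Fin n))
    (hx : Differentiable ℝ x)
    (hode : ∀ t : ℝ, 0 ≤ t → deriv x t = f (x t))
    (hinit : x 0 ∈ X0) :
    ∀ t : ℝ, 0 ≤ t → x t ∉ Xu :=
  barrier_certificate_safety_general n f X0 Xu ε₁ hε₁ B hB hB0 hBu hBlie x hx hode hinit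
end

section
/- Let n be a positive integer, f : ℝⁿ → ℝⁿ, and ε₁ > 0. Suppose B : ℝⁿ → ℝ is continuously differentiable and ⟨∇B(x), f(x)⟩ ≤ 0 for all x ∈ ℝⁿ with |B(x)| ≤ √ε₁. Then the sublevel set {x ∈ ℝⁿ : B(x) ≤ 0} is forward invariant along trajectories: if x : ℝ → ℝⁿ is differentiable with x′(t) = f(x(t)) for all t ≥ 0 and B(x(0)) ≤ 0, then B(x(t)) ≤ 0 for all t ≥ 0. -/
/-!
Along a trajectory, `g t = B (x t)` has `g' ≤ 0` wherever `|g| < √ε₁`. The set `{g ≤ 0}` then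
propagates to the right by continuous induction: from a point where `g < 0` by continuity, and
from a point where `g = 0` because `|g|` stays below `√ε₁` for a while, during which `g` is
antitone.
-/

open Set Filter Topology

theorem eventually_nonpos_nhdsGT_of_deriv_nonpos_of_abs_lt {g g' : ℝ → ℝ} {a δ x : ℝ}
    (hδ : 0 < δ) (hg : ∀ t ≥ a, HasDerivAt g (g' t) t)
    (hg' : ∀ t ≥ a, |g t| < δ → g' t ≤ 0) (hxa : a ≤ x) (hx : g x ≤ 0) :
    ∀ᶠ y in 𝓝[>] x, g y ≤ 0 := by
  have hcont : ContinuousAt g x := (hg x hxa).continuousAt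
  rcases hx.lt_or_eq with hneg | hzero
  · exact nhdsWithin_le_nhds ((hcont.eventually_lt continuousAt_const hneg).mono fun _ ↦ le_of_lt)
  have hsmall : ∀ᶠ y in 𝓝[>] x, |g y| < δ :=
    nhdsWithin_le_nhds (hcont.abs.eventually_lt continuousAt_const (by simpa [hzero]))
  obtain ⟨u, hxu, hu⟩ := mem_nhdsGT_iff_exists_Ioo_subset.mp hsmall
  have hanti : AntitoneOn g (Ico x u) := by
    refine antitoneOn_of_hasDerivWithinAt_nonpos (convex_Ico x u)
      (fun t ht ↦ (hg t (hxa.trans ht.1)).continuousAt.continuousWithinAt) (f' := g')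
      (fun t ht ↦ ?_) (fun t ht ↦ ?_) <;> rw [interior_Ico] at ht
    · exact (hg t (hxa.trans ht.1.le)).hasDerivWithinAt
    · exact hg' t (hxa.trans ht.1.le) (hu ht)
  filter_upwards [Ioo_mem_nhdsGT hxu] with y hy
  exact hzero ▸ hanti ⟨le_rfl, hxu⟩ (Ioo_subset_Ico_self hy) hy.1.le

theorem nonpos_of_deriv_nonpos_of_abs_lt {g g' : ℝ → ℝ} {a δ : ℝ}
    (hδ : 0 < δ) (hg : ∀ t ≥ a, HasDerivAt g (g' t) t)
    (hg' : ∀ t ≥ a, |g t| < δ → g' t ≤ 0) (ha : g a ≤ 0) :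
    ∀ t ≥ a, g t ≤ 0 := by
  intro b hab
  have hclosed : IsClosed ({t | g t ≤ 0} ∩ Icc a b) := by
    rw [inter_comm]
    exact ContinuousOn.preimage_isClosed_of_isClosed
      (fun t ht ↦ (hg t ht.1).continuousAt.continuousWithinAt) isClosed_Icc isClosed_Iic
  refine hclosed.Icc_subset_of_forall_mem_nhdsWithin ha (fun t ht ↦ ?_) ⟨hab, le_rfl⟩
  exact eventually_nonpos_nhdsGT_of_deriv_nonpos_of_abs_lt hδ hg hg' ht.2.1 ht.1

theorem barrier_sublevel_forward_invariant_general
    (n : ℕ)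
    (f : EuclideanSpace ℝ (Fin n) → EuclideanSpace ℝ (Fin n))
    (ε₁ : ℝ) (hε₁ : 0 < ε₁)
    (B : EuclideanSpace ℝ (Fin n) → ℝ)
    (hB : ContDiff ℝ 1 B)
    (hBlie : ∀ x : EuclideanSpace ℝ (Fin n),
      |B x| ≤ Real.sqrt ε₁ → fderiv ℝ B x (f x) ≤ 0)
    (x : ℝ → EuclideanSpace ℝ (Fin n))
    (hx : Differentiable ℝ x)
    (hode : ∀ t : ℝ, 0 ≤ t → deriv x t = f (x t))
    (hinit : B (x 0) ≤ 0) :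
    ∀ t : ℝ, 0 ≤ t → B (x t) ≤ 0 := by
  have hchain (t : ℝ) : HasDerivAt (B ∘ x) (fderiv ℝ B (x t) (deriv x t)) t :=
    (hB.differentiable one_ne_zero (x t)).hasFDerivAt.comp_hasDerivAt t (hx t).hasDerivAt
  refine nonpos_of_deriv_nonpos_of_abs_lt (Real.sqrt_pos.mpr hε₁) (fun t _ ↦ hchain t)
    (fun t ht hsmall ↦ ?_) hinit
  rw [hode t ht]
  exact hBlie (x t) hsmall.le

/-- The sublevel set `{x : B x ≤ 0}` is forward invariant along trajectories of `ẋ = f x`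
whenever the Lie derivative of `B` along `f` is nonpositive wherever `|B x| ≤ √ε₁`. -/
theorem barrier_sublevel_forward_invariant
    (n : ℕ) (hn : 0 < n)
    (f : EuclideanSpace ℝ (Fin n) → EuclideanSpace ℝ (Fin n))
    (ε₁ : ℝ) (hε₁ : 0 < ε₁)
    (B : EuclideanSpace ℝ (Fin n) → ℝ)
    (hB : ContDiff ℝ 1 B)
    (hBlie : ∀ x : EuclideanSpace ℝ (Fin n),
      |B x| ≤ Real.sqrt ε₁ → fderiv ℝ B x (f x) ≤ 0)
    (x : ℝ → EuclideanSpace ℝ (Fin n))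
    (hx : Differentiable ℝ x)
    (hode : ∀ t : ℝ, 0 ≤ t → deriv x t = f (x t))
    (hinit : B (x 0) ≤ 0) :
    ∀ t : ℝ, 0 ≤ t → B (x t) ≤ 0 :=
  barrier_sublevel_forward_invariant_general n f ε₁ hε₁ B hB hBlie x hx hode hinit
end

section
/- Let n be a positive integer, f : ℝⁿ → ℝⁿ, let 𝒳ᵤ ⊆ ℝⁿ, and let ε₁ > 0. Suppose B : ℝⁿ → ℝ is continuously differentiable, B(x) > 0 for all x ∈ 𝒳ᵤ, and ⟨∇B(x), f(x)⟩ ≤ 0 for all x ∈ ℝⁿ with |B(x)| ≤ √ε₁. Define the certified safe set 𝒳ₛ := {x ∈ ℝⁿ : B(x) ≤ 0}. Then every trajectory starting in 𝒳ₛ never enters 𝒳ᵤ: if x : ℝ → ℝⁿ is differentiable with x′(t) = f(x(t)) for all t ≥ 0 and x(0) ∈ 𝒳ₛ, then x(t) ∉ 𝒳ᵤ for all t ≥ 0. -/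
/-!
Along a trajectory, `t ↦ B (x t)` has derivative `⟨∇B(x t), f(x t)⟩`, which is `≤ 0` whenever
`B (x t)` lies in the band `(0, √ε₁]`. A real function starting at a value `≤ 0` cannot cross such
a band upwards, so `B` stays `≤ 0` and the trajectory never meets `{B > 0} ⊇ 𝒳ᵤ`.
-/

open Set Filter Topology

theorem image_nonpos_of_deriv_right_nonpos_of_mem_Ioc {g g' : ℝ → ℝ} {a b δ : ℝ} (hδ : 0 < δ)
    (hg : ContinuousOn g (Icc a b)) (hg' : ∀ x ∈ Ico a b, HasDerivWithinAt g (g' x) (Ici x) x)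
    (ha : g a ≤ 0) (hband : ∀ x ∈ Ico a b, g x ∈ Ioc 0 δ → g' x ≤ 0) :
    ∀ ⦃x⦄, x ∈ Icc a b → g x ≤ 0 := by
  intro x hx
  have hlen : 0 < b - a + 1 := by linarith [hx.1.trans hx.2]
  -- Fence `g` by the lines `r * (u - a + 1)`: where `g` meets one of them its value lies in
  -- `(0, δ]`, so `g` has slope `≤ 0 < r` there.
  have hfence : ∀ r ∈ Ioo 0 (δ / (b - a + 1)), g x ≤ r * (x - a + 1) := by
    rintro r ⟨hr, hrδ⟩
    have hrδ' : r * (b - a + 1) < δ := (lt_div_iff₀ hlen).1 hrδ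
    refine image_le_of_deriv_right_lt_deriv_boundary (B := fun u => r * (u - a + 1))
      (B' := fun _ => r) hg hg' (by simpa using ha.trans hr.le) (fun u => ?_) ?_ hx
    · simpa using (((hasDerivAt_id u).sub_const a).add_const 1).const_mul r
    · intro u hu hgu
      have hu_pos : 0 < u - a + 1 := by linarith [hu.1]
      have hu_le : r * (u - a + 1) ≤ r * (b - a + 1) := by gcongr; exact hu.2.le
      refine (hband u hu ⟨?_, ?_⟩).trans_lt hr
      · rw [hgu]; exact mul_pos hr hu_pos
      · rw [hgu]; exact hu_le.trans hrδ'.le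
  have hlim : Tendsto (fun r => r * (x - a + 1)) (𝓝[>] 0) (𝓝 0) := by
    simpa using ((continuous_mul_const (x - a + 1)).tendsto 0).mono_left nhdsWithin_le_nhds
  exact ge_of_tendsto hlim (eventually_of_mem (Ioo_mem_nhdsGT (div_pos hδ hlen)) hfence)

theorem certified_safe_set_safety_general
    (n : ℕ)
    (f : EuclideanSpace ℝ (Fin n) → EuclideanSpace ℝ (Fin n))
    (Xu : Set (EuclideanSpace ℝ (Fin n)))
    (ε₁ : ℝ) (hε₁ : 0 < ε₁)
    (B : EuclideanSpace ℝ (Fin n) → ℝ)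
    (hB : ContDiff ℝ 1 B)
    (hBu : ∀ x ∈ Xu, 0 < B x)
    (hBlie : ∀ x : EuclideanSpace ℝ (Fin n),
      |B x| ≤ Real.sqrt ε₁ → fderiv ℝ B x (f x) ≤ 0)
    (Xs : Set (EuclideanSpace ℝ (Fin n)))
    (hXs : Xs = {x : EuclideanSpace ℝ (Fin n) | B x ≤ 0})
    (x : ℝ → EuclideanSpace ℝ (Fin n))
    (hx : Differentiable ℝ x)
    (hode : ∀ t : ℝ, 0 ≤ t → deriv x t = f (x t))
    (hinit : x 0 ∈ Xs) :
    ∀ t : ℝ, 0 ≤ t → x t ∉ Xu := by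
  subst hXs
  intro t ht hxt
  have hBd : Differentiable ℝ B := hB.differentiable one_ne_zero
  have hderiv : ∀ u, 0 ≤ u → HasDerivAt (fun u => B (x u)) (fderiv ℝ B (x u) (f (x u))) u :=
    fun u hu => hode u hu ▸ (hBd (x u)).hasFDerivAt.comp_hasDerivAt u (hx u).hasDerivAt
  have hsafe : B (x t) ≤ 0 :=
    image_nonpos_of_deriv_right_nonpos_of_mem_Ioc (g := fun u => B (x u)) (Real.sqrt_pos.2 hε₁)
      (hBd.comp hx).continuous.continuousOn
      (fun u hu => (hderiv u hu.1).hasDerivWithinAt) hinit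
      (fun u _ hband => hBlie (x u) ((abs_of_pos hband.1).trans_le hband.2))
      ⟨ht, le_rfl⟩
  exact (hBu _ hxt).not_ge hsafe

/-- Trajectories starting in the certified safe set `𝒳ₛ = {x : B x ≤ 0}` never enter
the unsafe set `𝒳ᵤ`. -/
theorem certified_safe_set_safety
    (n : ℕ) (hn : 0 < n)
    (f : EuclideanSpace ℝ (Fin n) → EuclideanSpace ℝ (Fin n))
    (Xu : Set (EuclideanSpace ℝ (Fin n)))
    (ε₁ : ℝ) (hε₁ : 0 < ε₁)
    (B : EuclideanSpace ℝ (Fin n) → ℝ)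
    (hB : ContDiff ℝ 1 B)
    (hBu : ∀ x ∈ Xu, 0 < B x)
    (hBlie : ∀ x : EuclideanSpace ℝ (Fin n),
      |B x| ≤ Real.sqrt ε₁ → fderiv ℝ B x (f x) ≤ 0)
    (Xs : Set (EuclideanSpace ℝ (Fin n)))
    (hXs : Xs = {x : EuclideanSpace ℝ (Fin n) | B x ≤ 0})
    (x : ℝ → EuclideanSpace ℝ (Fin n))
    (hx : Differentiable ℝ x)
    (hode : ∀ t : ℝ, 0 ≤ t → deriv x t = f (x t))
    (hinit : x 0 ∈ Xs) :
    ∀ t : ℝ, 0 ≤ t → x t ∉ Xu :=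
  certified_safe_set_safety_general n f Xu ε₁ hε₁ B hB hBu hBlie Xs hXs x hx hode hinit
end

section
/- Let g : ℝ → ℝ be differentiable, let ε > 0, and let T > 0 be such that g(0) ≤ 0 and g(T) > 0. Then there exists s ∈ (0, T) such that |g(s)| ≤ √ε and g′(s) > 0. -/
/-- Real-analysis core of the barrier-certificate argument: if a differentiable
function `g` satisfies `g 0 ≤ 0` and `g T > 0`, then there is a point `s ∈ (0, T)`
at which `|g s| ≤ √ε` and `g' s > 0`. -/
theorem exists_crossing_point_with_positive_deriv
    (g : ℝ → ℝ) (hg : Differentiable ℝ g)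
    (ε : ℝ) (hε : 0 < ε)
    (T : ℝ) (hT : 0 < T)
    (h0 : g 0 ≤ 0) (hTpos : 0 < g T) :
    ∃ s ∈ Set.Ioo (0 : ℝ) T, |g s| ≤ Real.sqrt ε ∧ 0 < deriv g s := by
  have hgc : Continuous g := hg.continuous
  have hSclosed : IsClosed {t | t ∈ Set.Icc 0 T ∧ g t ≤ 0} := by
    have : {t | t ∈ Set.Icc 0 T ∧ g t ≤ 0} = Set.Icc 0 T ∩ g ⁻¹' (Set.Iic 0) := by
      ext u; simp [Set.mem_Icc, and_assoc]
    rw [this]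
    exact isClosed_Icc.inter (isClosed_Iic.preimage hgc)
  have hScpt : IsCompact {t | t ∈ Set.Icc 0 T ∧ g t ≤ 0} :=
    isCompact_Icc.of_isClosed_subset hSclosed (fun u hu => hu.1)
  obtain ⟨a, haS, haGr⟩ := hScpt.exists_isGreatest ⟨0, ⟨le_refl 0, hT.le⟩, h0⟩
  have ha0 : 0 ≤ a := haS.1.1
  have haT : a ≤ T := haS.1.2
  have hgaZ : g a ≤ 0 := haS.2
  have haT' : a < T := lt_of_le_of_ne haT (by rintro rfl; linarith)
  -- On (a, T], g > 0
  have hpos : ∀ u, a < u → u ≤ T → 0 < g u := by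
    intro u hau huT
    by_contra h
    push_neg at h
    exact absurd (haGr ⟨⟨le_trans ha0 hau.le, huT⟩, h⟩) (not_le.mpr hau)
  -- g a = 0 by right limit
  have hga0 : g a = 0 := by
    refine le_antisymm hgaZ ?_
    have htend : Filter.Tendsto g (nhdsWithin a (Set.Ioi a)) (nhds (g a)) :=
      (hgc.continuousAt).continuousWithinAt
    refine ge_of_tendsto htend ?_
    filter_upwards [Ioo_mem_nhdsGT haT'] with u hu
    exact (hpos u hu.1 hu.2.le).le
  have hsqrt : 0 < Real.sqrt ε := Real.sqrt_pos.mpr hε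
  -- continuity at a: choose δ
  obtain ⟨δ, hδ, hball⟩ :=
    Metric.continuousAt_iff.mp (hgc.continuousAt (x := a)) (Real.sqrt ε) hsqrt
  have hmin : 0 < min δ (T - a) := lt_min hδ (by linarith)
  have hat : a < a + min δ (T - a) / 2 := by linarith
  have htT : a + min δ (T - a) / 2 < T := by
    have : min δ (T - a) ≤ T - a := min_le_right _ _
    linarith
  have hclose : ∀ x, a ≤ x → x ≤ a + min δ (T - a) / 2 → |g x| < Real.sqrt ε := by
    intro x hax hxt
    have h1 : min δ (T - a) ≤ δ := min_le_left _ _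
    have hd : dist x a < δ := by
      rw [Real.dist_eq, abs_of_nonneg (by linarith)]
      linarith
    have := hball hd
    rwa [Real.dist_eq, hga0, sub_zero] at this
  -- MVT on [a, a + min δ (T - a) / 2]
  obtain ⟨s, hs, hds⟩ := exists_deriv_eq_slope g hat hgc.continuousOn hg.differentiableOn
  have hgt : 0 < g (a + min δ (T - a) / 2) := hpos _ hat htT.le
  refine ⟨s, ⟨lt_of_le_of_lt ha0 hs.1, lt_trans hs.2 htT⟩, (hclose s hs.1.le hs.2.le).le, ?_⟩
  rw [hds, hga0, sub_zero]
  exact div_pos hgt (by linarith)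
end

section
/- Let n, p, m be positive integers and ε₁, ε₂ > 0. Let B, g̃₁, …, g̃ₚ, g₁, …, g_m, φ, τ₁, …, τₚ, σ₁, …, σ_m be real multivariate polynomials in n variables, and let f₁, …, fₙ be real multivariate polynomials in n variables. Suppose φ, each τᵢ, and each σⱼ are sums of squares of polynomials, and that the following three polynomials are sums of squares: (i) −B − Σᵢ₌₁ᵖ τᵢ·g̃ᵢ; (ii) B − ε₂ − Σⱼ₌₁ᵐ σⱼ·gⱼ; (iii) −Σₖ₌₁ⁿ (∂B/∂xₖ)·fₖ − φ·(ε₁ − B²) − ε₂·(x₁² + ⋯ + xₙ²). Then B is a barrier certificate for f = (f₁, …, fₙ) with respect to 𝒳₀ = {x ∈ ℝⁿ : g̃₁(x) ≥ 0, …, g̃ₚ(x) ≥ 0} and 𝒳ᵤ = {x ∈ ℝⁿ : g₁(x) ≥ 0, …, g_m(x) ≥ 0}; that is: B(x) ≤ 0 for all x ∈ 𝒳₀; B(x) > 0 for all x ∈ 𝒳ᵤ; and Σₖ₌₁ⁿ (∂B/∂xₖ)(x)·fₖ(x) ≤ 0 for all x ∈ ℝⁿ with |B(x)| ≤ √ε₁.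 -/
/-! Sums of squares evaluate to nonnegative reals. Evaluated at a point of `𝒳₀`, `𝒳ᵤ` or
the band `|B| ≤ √ε₁`, every multiplier `τᵢ g̃ᵢ`, `σⱼ gⱼ`, `φ (ε₁ - B²)` and `ε₂ ‖x‖²` is
nonnegative, so each SOS condition rearranges into the corresponding inequality. -/

open MvPolynomial

/-- A multivariate real polynomial is a sum of squares if it is a finite sum of
squares of polynomials. -/
def IsSOSPoly {n : ℕ} (q : MvPolynomial (Fin n) ℝ) : Prop :=
  ∃ (k : ℕ) (h : Fin k → MvPolynomial (Fin n) ℝ), q = ∑ i : Fin k, (h i) ^ 2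

namespace IsSOSPoly

variable {n : ℕ}

lemma eval_nonneg {q : MvPolynomial (Fin n) ℝ} (hq : IsSOSPoly q) (x : Fin n → ℝ) :
    0 ≤ eval x q := by
  obtain ⟨k, h, rfl⟩ := hq
  simp only [map_sum, map_pow]
  exact Finset.sum_nonneg fun i _ => sq_nonneg _

lemma eval_nonneg_of_sub_sum_mul {ι : Type*} [Fintype ι] {q : MvPolynomial (Fin n) ℝ}
    {σ g : ι → MvPolynomial (Fin n) ℝ} (hσ : ∀ i, IsSOSPoly (σ i))
    (hq : IsSOSPoly (q - ∑ i, σ i * g i)) {x : Fin n → ℝ} (hx : ∀ i, 0 ≤ eval x (g i)) :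
    0 ≤ eval x q := by
  have hcert := hq.eval_nonneg x
  have hsum : 0 ≤ ∑ i, eval x (σ i) * eval x (g i) :=
    Finset.sum_nonneg fun i _ => mul_nonneg ((hσ i).eval_nonneg x) (hx i)
  simp only [map_sub, map_sum, map_mul] at hcert
  linarith

end IsSOSPoly

theorem sos_conditions_give_barrier_certificate_general
    (n p m : ℕ)
    (ε₁ ε₂ : ℝ) (hε₁ : 0 < ε₁) (hε₂ : 0 < ε₂)
    (B : MvPolynomial (Fin n) ℝ)
    (gt : Fin p → MvPolynomial (Fin n) ℝ)
    (g : Fin m → MvPolynomial (Fin n) ℝ)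
    (φ : MvPolynomial (Fin n) ℝ)
    (τ : Fin p → MvPolynomial (Fin n) ℝ)
    (σ : Fin m → MvPolynomial (Fin n) ℝ)
    (f : Fin n → MvPolynomial (Fin n) ℝ)
    (hφ : IsSOSPoly φ)
    (hτ : ∀ i : Fin p, IsSOSPoly (τ i))
    (hσ : ∀ j : Fin m, IsSOSPoly (σ j))
    (hcond1 : IsSOSPoly (-B - ∑ i : Fin p, τ i * gt i))
    (hcond2 : IsSOSPoly (B - C ε₂ - ∑ j : Fin m, σ j * g j))
    (hcond3 : IsSOSPoly
      (-(∑ k : Fin n, (pderiv k B) * f k) - φ * (C ε₁ - B ^ 2)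
        - C ε₂ * (∑ k : Fin n, (X k) ^ 2))) :
    (∀ x : Fin n → ℝ, (∀ i : Fin p, 0 ≤ eval x (gt i)) → eval x B ≤ 0) ∧
    (∀ x : Fin n → ℝ, (∀ j : Fin m, 0 ≤ eval x (g j)) → 0 < eval x B) ∧
    (∀ x : Fin n → ℝ, |eval x B| ≤ Real.sqrt ε₁ →
      ∑ k : Fin n, eval x (pderiv k B) * eval x (f k) ≤ 0) := by
  refine ⟨fun x hx => ?_, fun x hx => ?_, fun x hx => ?_⟩
  · have h := IsSOSPoly.eval_nonneg_of_sub_sum_mul hτ hcond1 hx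
    simpa only [map_neg, neg_nonneg] using h
  · have h := IsSOSPoly.eval_nonneg_of_sub_sum_mul hσ hcond2 hx
    simp only [map_sub, eval_C, sub_nonneg] at h
    linarith
  · have hcert := hcond3.eval_nonneg x
    simp only [map_sub, map_neg, map_sum, map_mul, map_pow, eval_C, eval_X] at hcert
    have hB : eval x B ^ 2 ≤ ε₁ := (Real.sq_le hε₁.le).2 (abs_le.1 hx)
    have hφ_term : 0 ≤ eval x φ * (ε₁ - eval x B ^ 2) :=
      mul_nonneg (hφ.eval_nonneg x) (sub_nonneg.2 hB)
    have hnorm_term : 0 ≤ ε₂ * ∑ k, x k ^ 2 :=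
      mul_nonneg hε₂.le (Finset.sum_nonneg fun k _ => sq_nonneg _)
    linarith

/-- The three SOS conditions of Proposition 2 imply that `B` is a barrier certificate
for the polynomial vector field `f` with respect to the basic semialgebraic initial set
`𝒳₀` and unsafe set `𝒳ᵤ`. -/
theorem sos_conditions_give_barrier_certificate
    (n p m : ℕ) (hn : 0 < n) (hp : 0 < p) (hm : 0 < m)
    (ε₁ ε₂ : ℝ) (hε₁ : 0 < ε₁) (hε₂ : 0 < ε₂)
    (B : MvPolynomial (Fin n) ℝ)
    (gt : Fin p → MvPolynomial (Fin n) ℝ)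
    (g : Fin m → MvPolynomial (Fin n) ℝ)
    (φ : MvPolynomial (Fin n) ℝ)
    (τ : Fin p → MvPolynomial (Fin n) ℝ)
    (σ : Fin m → MvPolynomial (Fin n) ℝ)
    (f : Fin n → MvPolynomial (Fin n) ℝ)
    (hφ : IsSOSPoly φ)
    (hτ : ∀ i : Fin p, IsSOSPoly (τ i))
    (hσ : ∀ j : Fin m, IsSOSPoly (σ j))
    (hcond1 : IsSOSPoly (-B - ∑ i : Fin p, τ i * gt i))
    (hcond2 : IsSOSPoly (B - C ε₂ - ∑ j : Fin m, σ j * g j))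
    (hcond3 : IsSOSPoly
      (-(∑ k : Fin n, (pderiv k B) * f k) - φ * (C ε₁ - B ^ 2)
        - C ε₂ * (∑ k : Fin n, (X k) ^ 2))) :
    (∀ x : Fin n → ℝ, (∀ i : Fin p, 0 ≤ eval x (gt i)) → eval x B ≤ 0) ∧
    (∀ x : Fin n → ℝ, (∀ j : Fin m, 0 ≤ eval x (g j)) → 0 < eval x B) ∧
    (∀ x : Fin n → ℝ, |eval x B| ≤ Real.sqrt ε₁ →
      ∑ k : Fin n, eval x (pderiv k B) * eval x (f k) ≤ 0) :=
  sos_conditions_give_barrier_certificate_general n p m ε₁ ε₂ hε₁ hε₂ B gt g φ τ σ f hφ hτ hσ hcond1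
    hcond2 hcond3
end

section
/- Let n, p, m be positive integers and ε₁, ε₂ > 0. Let B, g̃₁, …, g̃ₚ, g₁, …, g_m, φ, τ₁, …, τₚ, σ₁, …, σ_m, f₁, …, fₙ be real multivariate polynomials in n variables. Suppose φ, each τᵢ, and each σⱼ are sums of squares of polynomials, and that the following three polynomials are sums of squares: (i) −B − Σᵢ₌₁ᵖ τᵢ·g̃ᵢ; (ii) B − ε₂ − Σⱼ₌₁ᵐ σⱼ·gⱼ; (iii) −Σₖ₌₁ⁿ (∂B/∂xₖ)·fₖ − φ·(ε₁ − B²) − ε₂·(x₁² + ⋯ + xₙ²). Then the polynomial dynamical system ẋ = f(x), where f = (f₁, …, fₙ), is safe with respect to 𝒳₀ = {x ∈ ℝⁿ : g̃₁(x) ≥ 0, …, g̃ₚ(x) ≥ 0} and 𝒳ᵤ = {x ∈ ℝⁿ : g₁(x) ≥ 0, …, g_m(x) ≥ 0}: if x : ℝ → ℝⁿ is differentiable with x′(t) = f(x(t)) for all t ≥ 0 and x(0) ∈ 𝒳₀, then x(t) ∉ 𝒳ᵤ for all t ≥ 0. -/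
/-!
Let `b t = B (x t)`. Condition (i) gives `b 0 ≤ 0` on `𝒳₀`, condition (ii) gives `b ≥ ε₂ > 0`
on `𝒳ᵤ`, and condition (iii) says that `ḃ = ∑ₖ ∂ₖB · fₖ ≤ -ε₂ ‖x‖² ≤ 0` wherever `b² ≤ ε₁`,
in particular wherever `0 < b < √ε₁`. A function that starts nonpositive and cannot increase
while it is slightly positive stays nonpositive, so the trajectory never reaches `𝒳ᵤ`.
-/

open MvPolynomial

open Set in
theorem image_nonpos_of_deriv_right_nonpos_of_lt {f f' : ℝ → ℝ} {a b δ : ℝ} (hδ : 0 < δ)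
    (hf : ContinuousOn f (Icc a b)) (hf' : ∀ x ∈ Ico a b, HasDerivWithinAt f (f' x) (Ici x) x)
    (ha : f a ≤ 0) (bound : ∀ x ∈ Ico a b, 0 < f x → f x < δ → f' x ≤ 0) :
    ∀ ⦃x⦄, x ∈ Icc a b → f x ≤ 0 := by
  intro x hx
  by_contra! hfx
  -- Fence `f` by `s ↦ r (s - a + 1)` with `r > 0` small: this barrier is positive and strictly
  -- increasing, so `f' ≤ 0` where `f` touches it suffices, and it stays below `min (f x) δ`.
  obtain ⟨ρ, hρ, hρ_lt⟩ := exists_between (lt_min hfx hδ)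
  set r := ρ / (b - a + 1)
  have hab : 0 < b - a + 1 := by linarith [hx.1.trans hx.2]
  have hr : 0 < r := div_pos hρ hab
  have hfence_le : ∀ s ∈ Icc a b, r * (s - a + 1) ≤ ρ := fun s hs =>
    calc r * (s - a + 1) ≤ r * (b - a + 1) := by gcongr; exact hs.2
      _ = ρ := div_mul_cancel₀ ρ hab.ne'
  have hfence : ∀ s, HasDerivAt (fun s => r * (s - a + 1)) r s := fun s => by
    simpa using (((hasDerivAt_id s).sub_const a).add_const 1).const_mul r
  have hfx_le := image_le_of_deriv_right_lt_deriv_boundary hf hf' (by simpa using ha.trans hr.le)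
    hfence (fun s hs hfs => ?_) hx
  · linarith [hfence_le x hx, (lt_min_iff.mp hρ_lt).1]
  · refine (bound s hs ?_ ?_).trans_lt hr <;> rw [hfs]
    · nlinarith [hs.1]
    · linarith [hfence_le s (Ico_subset_Icc_self hs), (lt_min_iff.mp hρ_lt).2]

theorem IsSOSPoly.eval_nonneg_s8 {n : ℕ} {q : MvPolynomial (Fin n) ℝ} (hq : IsSOSPoly q)
    (y : Fin n → ℝ) : 0 ≤ eval y q := by
  obtain ⟨k, h, rfl⟩ := hq
  simp only [map_sum, map_pow]
  exact Finset.sum_nonneg fun i _ => sq_nonneg _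

theorem eval_sum_mul_nonneg_of_isSOSPoly {n p : ℕ} {τ g : Fin p → MvPolynomial (Fin n) ℝ}
    (hτ : ∀ i, IsSOSPoly (τ i)) {y : Fin n → ℝ} (hg : ∀ i, 0 ≤ eval y (g i)) :
    0 ≤ eval y (∑ i, τ i * g i) := by
  simp only [map_sum, map_mul]
  exact Finset.sum_nonneg fun i _ => mul_nonneg ((hτ i).eval_nonneg_s8 y) (hg i)

theorem MvPolynomial.hasDerivAt_eval_comp {σ : Type*} [Fintype σ] {x : ℝ → σ → ℝ}
    {x' : σ → ℝ} {t : ℝ} (hx : HasDerivAt x x' t) (q : MvPolynomial σ ℝ) :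
    HasDerivAt (fun s => eval (x s) q) (∑ k, eval (x t) (pderiv k q) * x' k) t := by

  induction q using MvPolynomial.induction_on with
  | C a => simpa using hasDerivAt_const t a
  | add q r hq hr => simpa [add_mul, Finset.sum_add_distrib] using hq.fun_add hr
  | mul_X q k hq =>
    simp only [map_mul, eval_X]
    refine (hq.fun_mul (hasDerivAt_pi.mp hx k)).congr_deriv ?_
    simp only [pderiv_mul, map_add, map_mul, eval_X, add_mul, Finset.sum_add_distrib,
      Finset.sum_mul]
    congr 1
    · exact Finset.sum_congr rfl fun j _ => mul_right_comm _ _ _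
    · rw [Finset.sum_eq_single k (fun j _ hj => by simp [pderiv_X_of_ne hj.symm]) (by simp)]
      simp

section Certificates

variable {n : ℕ} {B : MvPolynomial (Fin n) ℝ} {y : Fin n → ℝ}

theorem eval_nonpos_of_isSOSPoly_neg_sub {p : ℕ} {τ g : Fin p → MvPolynomial (Fin n) ℝ}
    (h : IsSOSPoly (-B - ∑ i, τ i * g i)) (hτ : ∀ i, IsSOSPoly (τ i))
    (hg : ∀ i, 0 ≤ eval y (g i)) : eval y B ≤ 0 := by
  have := h.eval_nonneg_s8 y
  simp only [map_sub, map_neg] at this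
  linarith [eval_sum_mul_nonneg_of_isSOSPoly hτ hg]

theorem le_eval_of_isSOSPoly_sub_sub {m : ℕ} {c : ℝ} {σ g : Fin m → MvPolynomial (Fin n) ℝ}
    (h : IsSOSPoly (B - C c - ∑ j, σ j * g j)) (hσ : ∀ j, IsSOSPoly (σ j))
    (hg : ∀ j, 0 ≤ eval y (g j)) : c ≤ eval y B := by
  have := h.eval_nonneg_s8 y
  simp only [map_sub, eval_C] at this
  linarith [eval_sum_mul_nonneg_of_isSOSPoly hσ hg]

theorem sum_eval_pderiv_mul_le_of_isSOSPoly {ε₁ ε₂ : ℝ} {φ : MvPolynomial (Fin n) ℝ}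
    {f : Fin n → MvPolynomial (Fin n) ℝ}
    (h : IsSOSPoly (-(∑ k, pderiv k B * f k) - φ * (C ε₁ - B ^ 2) - C ε₂ * ∑ k, X k ^ 2))
    (hφ : IsSOSPoly φ) (hy : eval y B ^ 2 ≤ ε₁) :
    ∑ k, eval y (pderiv k B) * eval y (f k) ≤ -(ε₂ * ∑ k, y k ^ 2) := by
  have := h.eval_nonneg_s8 y
  simp only [map_sub, map_neg, map_sum, map_mul, map_pow, eval_C, eval_X] at this
  nlinarith [hφ.eval_nonneg_s8 y]

end Certificates

theorem sos_conditions_give_safety_general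
    (n p m : ℕ)
    (ε₁ ε₂ : ℝ) (hε₁ : 0 < ε₁) (hε₂ : 0 < ε₂)
    (B : MvPolynomial (Fin n) ℝ)
    (gt : Fin p → MvPolynomial (Fin n) ℝ)
    (g : Fin m → MvPolynomial (Fin n) ℝ)
    (φ : MvPolynomial (Fin n) ℝ)
    (τ : Fin p → MvPolynomial (Fin n) ℝ)
    (σ : Fin m → MvPolynomial (Fin n) ℝ)
    (f : Fin n → MvPolynomial (Fin n) ℝ)
    (hφ : IsSOSPoly φ)
    (hτ : ∀ i : Fin p, IsSOSPoly (τ i))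
    (hσ : ∀ j : Fin m, IsSOSPoly (σ j))
    (hcond1 : IsSOSPoly (-B - ∑ i : Fin p, τ i * gt i))
    (hcond2 : IsSOSPoly (B - C ε₂ - ∑ j : Fin m, σ j * g j))
    (hcond3 : IsSOSPoly
      (-(∑ k : Fin n, (pderiv k B) * f k) - φ * (C ε₁ - B ^ 2)
        - C ε₂ * (∑ k : Fin n, (X k) ^ 2)))
    (x : ℝ → (Fin n → ℝ))
    (hx : Differentiable ℝ x)
    (hode : ∀ t : ℝ, 0 ≤ t → deriv x t = fun k : Fin n => eval (x t) (f k))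
    (hinit : ∀ i : Fin p, 0 ≤ eval (x 0) (gt i)) :
    ∀ t : ℝ, 0 ≤ t → ¬(∀ j : Fin m, 0 ≤ eval (x t) (g j)) := by
  intro t ht hunsafe
  set b : ℝ → ℝ := fun s => eval (x s) B
  have hb : ∀ s, HasDerivAt b (∑ k, eval (x s) (pderiv k B) * deriv x s k) s := fun s =>
    hasDerivAt_eval_comp (hx s).hasDerivAt B
  have hb_deriv_nonpos : ∀ s ∈ Set.Ico 0 t, 0 < b s → b s < √ε₁ →
      ∑ k, eval (x s) (pderiv k B) * deriv x s k ≤ 0 := by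
    intro s hs hpos hlt
    simp only [hode s hs.1]
    have hsq : b s ^ 2 ≤ ε₁ := ((Real.lt_sqrt hpos.le).mp hlt).le
    exact (sum_eval_pderiv_mul_le_of_isSOSPoly hcond3 hφ hsq).trans
      (neg_nonpos.mpr (by positivity))
  have hbt : b t ≤ 0 :=
    image_nonpos_of_deriv_right_nonpos_of_lt (Real.sqrt_pos.mpr hε₁)
      (fun s _ => (hb s).continuousAt.continuousWithinAt) (fun s _ => (hb s).hasDerivWithinAt)
      (eval_nonpos_of_isSOSPoly_neg_sub hcond1 hτ hinit) hb_deriv_nonpos ⟨ht, le_rfl⟩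
  linarith [le_eval_of_isSOSPoly_sub_sub hcond2 hσ hunsafe]

/-- The three SOS conditions of Proposition 2 imply that the polynomial dynamical
system `ẋ = f x` is safe: every trajectory starting in the basic semialgebraic initial
set `𝒳₀` never enters the basic semialgebraic unsafe set `𝒳ᵤ`. -/
theorem sos_conditions_give_safety
    (n p m : ℕ) (hn : 0 < n) (hp : 0 < p) (hm : 0 < m)
    (ε₁ ε₂ : ℝ) (hε₁ : 0 < ε₁) (hε₂ : 0 < ε₂)
    (B : MvPolynomial (Fin n) ℝ)
    (gt : Fin p → MvPolynomial (Fin n) ℝ)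
    (g : Fin m → MvPolynomial (Fin n) ℝ)
    (φ : MvPolynomial (Fin n) ℝ)
    (τ : Fin p → MvPolynomial (Fin n) ℝ)
    (σ : Fin m → MvPolynomial (Fin n) ℝ)
    (f : Fin n → MvPolynomial (Fin n) ℝ)
    (hφ : IsSOSPoly φ)
    (hτ : ∀ i : Fin p, IsSOSPoly (τ i))
    (hσ : ∀ j : Fin m, IsSOSPoly (σ j))
    (hcond1 : IsSOSPoly (-B - ∑ i : Fin p, τ i * gt i))
    (hcond2 : IsSOSPoly (B - C ε₂ - ∑ j : Fin m, σ j * g j))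
    (hcond3 : IsSOSPoly
      (-(∑ k : Fin n, (pderiv k B) * f k) - φ * (C ε₁ - B ^ 2)
        - C ε₂ * (∑ k : Fin n, (X k) ^ 2)))
    (x : ℝ → (Fin n → ℝ))
    (hx : Differentiable ℝ x)
    (hode : ∀ t : ℝ, 0 ≤ t → deriv x t = fun k : Fin n => eval (x t) (f k))
    (hinit : ∀ i : Fin p, 0 ≤ eval (x 0) (gt i)) :
    ∀ t : ℝ, 0 ≤ t → ¬(∀ j : Fin m, 0 ≤ eval (x t) (g j)) :=
  sos_conditions_give_safety_general n p m ε₁ ε₂ hε₁ hε₂ B gt g φ τ σ f hφ hτ hσ hcond1 hcond2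
    hcond3 x hx hode hinit
end
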